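/- For n ≥ 5 and any triangulation S of the convex n-gon, the graph T_n(S), whose vertices are triangulations of the n-gon disjoint from S with edges given by single diagonal flips that stay disjoint from S, is connected and has diameter at most 2n−8. -/

import Mathlib

/-- A diagonal of the convex `n`-gon: an unordered pair of distinct,
non-adjacent vertices (vertices labeled by `Fin n` in cyclic order). -/
def IsDiag (n : ℕ) (d : Sym2 (Fin n)) : Prop :=
  ∃ a b : Fin n, d = s(a, b) ∧ a ≠ b ∧
    (a.val + 1) % n ≠ b.val ∧ (b.val + 1) % n ≠ a.val

/-- Two diagonals of the convex `n`-gon cross (their endpoints strictly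
interleave around the polygon). -/
def Crosses (n : ℕ) (d e : Sym2 (Fin n)) : Prop :=
  (∃ a b c c' : Fin n, d = s(a, b) ∧ e = s(c, c') ∧ a < c ∧ c < b ∧ b < c') ∨
  (∃ a b c c' : Fin n, e = s(a, b) ∧ d = s(c, c') ∧ a < c ∧ c < b ∧ b < c')

/-- A triangulation of the convex `n`-gon: a maximal set of pairwise
noncrossing diagonals. -/
structure Triangulation (n : ℕ) where
  diags : Finset (Sym2 (Fin n))
  isDiag : ∀ d ∈ diags, IsDiag n d
  noncross : ∀ d ∈ diags, ∀ e ∈ diags, ¬ Crosses n d e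
  maximal : ∀ d, IsDiag n d → (∀ e ∈ diags, ¬ Crosses n d e) → d ∈ diags

/-- `IsFlip T d T'` : the triangulation `T'` is obtained from `T` by flipping
the diagonal `d` (removing `d`, keeping all other diagonals, and inserting the
opposite diagonal of the resulting quadrilateral). -/
def IsFlip {n : ℕ} (T : Triangulation n) (d : Sym2 (Fin n)) (T' : Triangulation n) : Prop :=
  d ∈ T.diags ∧ d ∉ T'.diags ∧ ∀ e ∈ T.diags, e ≠ d → e ∈ T'.diags

/-- Two triangulations are related by a single diagonal flip. -/
def FlipAdj {n : ℕ} (T T' : Triangulation n) : Prop := ∃ d, IsFlip T d T'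

/-- `d'` is the new diagonal created when passing from `T` to `T'`. -/
def NewDiag {n : ℕ} (T T' : Triangulation n) (d' : Sym2 (Fin n)) : Prop :=
  d' ∈ T'.diags ∧ d' ∉ T.diags

/-- Flip of a pair of triangulations at a diagonal of the first coordinate:
flip it there, and if the new diagonal lies in the second triangulation,
flip it there as well. -/
def PairFlipFst {n : ℕ} (p q : Triangulation n × Triangulation n) : Prop :=
  ∃ d T₁' d', IsFlip p.1 d T₁' ∧ NewDiag p.1 T₁' d' ∧
    ((d' ∉ p.2.diags ∧ q = (T₁', p.2)) ∨
     (d' ∈ p.2.diags ∧ ∃ T₂', IsFlip p.2 d' T₂' ∧ q = (T₁', T₂')))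

/-- Flip of a pair of triangulations at a diagonal of the second coordinate. -/
def PairFlipSnd {n : ℕ} (p q : Triangulation n × Triangulation n) : Prop :=
  ∃ d T₂' d', IsFlip p.2 d T₂' ∧ NewDiag p.2 T₂' d' ∧
    ((d' ∉ p.1.diags ∧ q = (p.1, T₂')) ∨
     (d' ∈ p.1.diags ∧ ∃ T₁', IsFlip p.1 d' T₁' ∧ q = (T₁', T₂')))

/-- The flip operation on ordered pairs of triangulations. -/
def PairFlip {n : ℕ} (p q : Triangulation n × Triangulation n) : Prop :=
  PairFlipFst p q ∨ PairFlipSnd p q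

/-- Vertices of the flip graph `D_n`: ordered pairs of triangulations of the
convex `n`-gon sharing no diagonal. -/
def DVert (n : ℕ) := {p : Triangulation n × Triangulation n // Disjoint p.1.diags p.2.diags}

/-- The flip graph `D_n` on ordered pairs of disjoint triangulations. -/
def DGraph (n : ℕ) : SimpleGraph (DVert n) where
  Adj p q := p ≠ q ∧ (PairFlip p.1 q.1 ∨ PairFlip q.1 p.1)
  symm := ⟨fun _ _ h => ⟨h.1.symm, h.2.symm⟩⟩
  loopless := ⟨fun _ h => h.1 rfl⟩

/-- The flip graph `T_n` on all triangulations of the convex `n`-gon. -/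
def TriGraph (n : ℕ) : SimpleGraph (Triangulation n) where
  Adj T T' := T ≠ T' ∧ (FlipAdj T T' ∨ FlipAdj T' T)
  symm := ⟨fun _ _ h => ⟨h.1.symm, h.2.symm⟩⟩
  loopless := ⟨fun _ h => h.1 rfl⟩

/-- Vertices of `T_n(S)`: triangulations disjoint from `S`. -/
def TnSVert (n : ℕ) (S : Triangulation n) := {T : Triangulation n // Disjoint T.diags S.diags}

/-- The flip graph `T_n(S)` induced on triangulations disjoint from `S`. -/
def TnS (n : ℕ) (S : Triangulation n) : SimpleGraph (TnSVert n S) where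
  Adj T T' := T ≠ T' ∧ (FlipAdj T.1 T'.1 ∨ FlipAdj T'.1 T.1)
  symm := ⟨fun _ _ h => ⟨h.1.symm, h.2.symm⟩⟩
  loopless := ⟨fun _ h => h.1 rfl⟩

/-!
Rotate the polygon so that `S` contains the ear diagonal `s(1, n - 1)` cutting off vertex `0`;
every triangulation has an ear. The diagonals crossing `s(1, n - 1)` are exactly those through
`0`, so no diagonal of `S` passes through `0`, while every triangulation `T` disjoint from `S`
contains at least one diagonal of the fan at `0`, hence misses at most `n - 4` of its `n - 3`
diagonals. Flipping a longest diagonal of `T` avoiding `0` creates a diagonal through `0`; such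
flips stay disjoint from `S` and reach the fan in at most `n - 4` steps, so any two vertices of
`T_n(S)` are joined through the fan by a path of length at most `2n - 8`.
-/

open Finset

section Polygon

variable {n : ℕ}

lemma crosses_comm {d e : Sym2 (Fin n)} : Crosses n d e ↔ Crosses n e d := or_comm

lemma not_crosses_of_mem_of_mem {d e : Sym2 (Fin n)} {x : Fin n} (hd : x ∈ d) (he : x ∈ e) :
    ¬ Crosses n d e := by
  rintro (⟨a, b, c, c', rfl, rfl, h₁, h₂, h₃⟩ | ⟨a, b, c, c', rfl, rfl, h₁, h₂, h₃⟩) <;>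
  · rw [Sym2.mem_iff] at hd he
    omega

lemma crosses_irrefl (d : Sym2 (Fin n)) : ¬ Crosses n d d := by
  induction d using Sym2.ind with
  | _ x y => exact not_crosses_of_mem_of_mem (Sym2.mem_mk_left x y) (Sym2.mem_mk_left x y)

lemma crosses_mk_iff {x y : Fin n} (hxy : x < y) {g : Sym2 (Fin n)} :
    Crosses n s(x, y) g ↔
      ∃ c c', g = s(c, c') ∧ ((x < c ∧ c < y ∧ y < c') ∨ (c < x ∧ x < c' ∧ c' < y)) := by
  constructor
  · rintro (⟨a, b, c, c', hab, rfl, h⟩ | ⟨a, b, c, c', rfl, hcc, h⟩)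
    · obtain ⟨rfl, rfl⟩ : x = a ∧ y = b := by rw [Sym2.eq_iff] at hab; omega
      exact ⟨c, c', rfl, Or.inl h⟩
    · obtain ⟨rfl, rfl⟩ : x = c ∧ y = c' := by rw [Sym2.eq_iff] at hcc; omega
      exact ⟨a, b, rfl, Or.inr h⟩
  · rintro ⟨c, c', rfl, h | h⟩
    · exact Or.inl ⟨x, y, c, c', rfl, rfl, h⟩
    · exact Or.inr ⟨c, c', x, y, rfl, rfl, h⟩

lemma crosses_mk_of_cyclic {a b c c' : Fin n}
    (h : (a < c ∧ c < b ∧ b < c') ∨ (c < b ∧ b < c' ∧ c' < a) ∨ (b < c' ∧ c' < a ∧ a < c) ∨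
      (c' < a ∧ a < c ∧ c < b)) : Crosses n s(a, b) s(c, c') := by
  rcases h with h | h | h | h
  · exact Or.inl ⟨a, b, c, c', rfl, rfl, h⟩
  · exact Or.inr ⟨c, c', b, a, rfl, Sym2.eq_swap, h⟩
  · exact Or.inl ⟨b, a, c', c, Sym2.eq_swap, Sym2.eq_swap, h⟩
  · exact Or.inr ⟨c', c, a, b, Sym2.eq_swap, rfl, h⟩

/-- Rotating by `k` shifts the cyclic order, so an interleaving pattern `a < c < b < c'`
becomes one of its cyclic rotations. -/
lemma crosses_map_add (k : Fin n) {d e : Sym2 (Fin n)} (h : Crosses n d e) :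
    Crosses n (d.map (· + k)) (e.map (· + k)) := by
  have key {a b c c' : Fin n} (h : a < c ∧ c < b ∧ b < c') :
      Crosses n s(a + k, b + k) s(c + k, c' + k) := by
    apply crosses_mk_of_cyclic
    simp only [Fin.lt_def, Fin.val_add_eq_ite] at h ⊢
    split_ifs <;> omega
  rcases h with ⟨a, b, c, c', rfl, rfl, h⟩ | ⟨a, b, c, c', rfl, rfl, h⟩
  · exact key h
  · exact crosses_comm.1 (key h)

lemma exists_mk_of_isDiag {d : Sym2 (Fin n)} (hd : IsDiag n d) : ∃ a b, a < b ∧ d = s(a, b) := by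
  obtain ⟨a, b, rfl, hab, -⟩ := hd
  rcases hab.lt_or_gt with h | h
  · exact ⟨a, b, h, rfl⟩
  · exact ⟨b, a, h, Sym2.eq_swap⟩

lemma isDiag_mk_iff {a b : Fin n} (hab : a < b) :
    IsDiag n s(a, b) ↔ a.val + 2 ≤ b.val ∧ ¬(a.val = 0 ∧ b.val = n - 1) := by
  have ha : (a.val + 1) % n = a.val + 1 := Nat.mod_eq_of_lt (by omega)
  have hb : (b.val + 1) % n = if b.val + 1 = n then 0 else b.val + 1 := by
    split_ifs with h
    · rw [h, Nat.mod_self]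
    · exact Nat.mod_eq_of_lt (by omega)
  constructor
  · rintro ⟨p, q, hpq, -, h₁, h₂⟩
    rw [Sym2.eq_iff] at hpq
    rcases hpq with ⟨rfl, rfl⟩ | ⟨rfl, rfl⟩ <;> split_ifs at hb <;> omega
  · rintro h
    refine ⟨a, b, rfl, hab.ne, by omega, ?_⟩
    split_ifs at hb <;> omega

/-- `x` and `y` are consecutive vertices of the polygon (the closing side being `(0, n - 1)`)
or are joined by a diagonal in `D`. -/
def Joins (D : Finset (Sym2 (Fin n))) (x y : Fin n) : Prop :=
  x.val + 1 = y.val ∨ (x.val = 0 ∧ y.val = n - 1) ∨ s(x, y) ∈ D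

lemma Joins.not_interleave {D : Finset (Sym2 (Fin n))} {x y c c' : Fin n} (h : Joins D x y)
    (hcc : ∀ g ∈ D, ¬ Crosses n s(c, c') g) :
    ¬(x < c ∧ c < y ∧ y < c') ∧ ¬(c < x ∧ x < c' ∧ c' < y) := by
  rcases h with h | h | h
  · omega
  · omega
  · exact ⟨fun hi => hcc _ h (Or.inr ⟨x, y, c, c', rfl, rfl, hi⟩),
      fun hi => hcc _ h (Or.inl ⟨c, c', x, y, rfl, rfl, hi⟩)⟩

lemma Joins.erase {D : Finset (Sym2 (Fin n))} {x y : Fin n} (h : Joins D x y)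
    {e : Sym2 (Fin n)} (he : s(x, y) ≠ e) : Joins (D.erase e) x y :=
  h.imp_right (Or.imp_right fun h => mem_erase.2 ⟨he, h⟩)

lemma FlipAdj.ne {T T' : Triangulation n} (h : FlipAdj T T') : T ≠ T' := by
  rintro rfl
  obtain ⟨d, hd, hd', -⟩ := h
  exact hd' hd

end Polygon

namespace Triangulation

variable {n : ℕ}

lemma diags_injective : Function.Injective (diags : Triangulation n → _) := by
  rintro ⟨D, _, _, _⟩ ⟨D', _, _, _⟩ (rfl : D = D')
  rfl

lemma joins_of_mem (T : Triangulation n) {x y : Fin n} (h : s(x, y) ∈ T.diags) :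
    Joins T.diags x y :=
  Or.inr (Or.inr h)

lemma mem_of_forall_not_interleave (T : Triangulation n) {x y : Fin n} (hxy : x.val + 2 ≤ y.val)
    (hside : ¬(x.val = 0 ∧ y.val = n - 1))
    (h : ∀ c c', s(c, c') ∈ T.diags → ¬(x < c ∧ c < y ∧ y < c') ∧ ¬(c < x ∧ x < c' ∧ c' < y)) :
    s(x, y) ∈ T.diags := by
  have hlt : x < y := by omega
  refine T.maximal _ ((isDiag_mk_iff hlt).2 ⟨hxy, hside⟩) fun g hg hcr => ?_
  obtain ⟨c, c', rfl, hi⟩ := (crosses_mk_iff hlt).1 hcr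
  have := h c c' hg
  tauto

/-- Every diagonal (or side) `s(a, b)` of `T` with `a + 2 ≤ b` bounds a triangle of `T` lying
in the interval `[a, b]`. -/
lemma exists_apex (T : Triangulation n) {a b : Fin n} (hab : a.val + 2 ≤ b.val)
    (h : Joins T.diags a b) : ∃ w, a < w ∧ w < b ∧ Joins T.diags a w ∧ Joins T.diags w b := by
  classical
  set P := univ.filter fun m : Fin n => a < m ∧ m < b ∧ Joins T.diags a m
  have hP : (⟨a.val + 1, by omega⟩ : Fin n) ∈ P := by
    simp only [P, mem_filter, mem_univ, true_and]
    exact ⟨Fin.lt_def.2 (by simp only; omega), Fin.lt_def.2 (by simp only; omega), Or.inl rfl⟩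
  obtain ⟨w, hw, hmax⟩ := P.exists_max_image id ⟨_, hP⟩
  simp only [P, mem_filter, mem_univ, true_and] at hw hmax
  obtain ⟨haw, hwb, hjoin⟩ := hw
  refine ⟨w, haw, hwb, hjoin, ?_⟩
  by_cases hwb' : w.val + 1 = b.val
  · exact Or.inl hwb'
  refine T.joins_of_mem (T.mem_of_forall_not_interleave (by omega) (by omega) fun c c' hg => ?_)
  have hab' := h.not_interleave (T.noncross _ hg)
  have haw' := hjoin.not_interleave (T.noncross _ hg)
  refine ⟨by omega, fun hi => ?_⟩
  by_cases hca : c = a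
  · subst hca
    have : c' ≤ w := hmax c' ⟨by omega, by omega, T.joins_of_mem hg⟩
    omega
  · omega

lemma exists_isFlip (T : Triangulation n) {e d : Sym2 (Fin n)} (he : e ∈ T.diags)
    (hd : IsDiag n d) (hde : Crosses n d e) (hcompat : ∀ g ∈ T.diags.erase e, ¬ Crosses n d g)
    (huniq : ∀ f, IsDiag n f → Crosses n f e → (∀ g ∈ T.diags.erase e, ¬ Crosses n f g) → f = d) :
    ∃ T' : Triangulation n, IsFlip T e T' ∧ T'.diags = insert d (T.diags.erase e) := by
  refine ⟨⟨insert d (T.diags.erase e), ?_, ?_, ?_⟩, ⟨he, ?_, ?_⟩, rfl⟩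
  · intro g hg
    rcases mem_insert.1 hg with rfl | hg
    · exact hd
    · exact T.isDiag _ (mem_of_mem_erase hg)
  · intro g hg g' hg'
    rcases mem_insert.1 hg with rfl | hgT <;> rcases mem_insert.1 hg' with rfl | hgT'
    · exact crosses_irrefl _
    · exact hcompat _ hgT'
    · exact fun h => hcompat _ hgT (crosses_comm.1 h)
    · exact T.noncross _ (mem_of_mem_erase hgT) _ (mem_of_mem_erase hgT')
  · intro f hf hnc
    by_cases hfe : Crosses n f e
    · exact mem_insert.2 (Or.inl (huniq f hf hfe fun g hg => hnc g (mem_insert_of_mem hg)))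
    have hfT : f ∈ T.diags := T.maximal f hf fun g hg => by
      by_cases hge : g = e
      · rwa [hge]
      · exact hnc g (mem_insert_of_mem (mem_erase.2 ⟨hge, hg⟩))
    have hfe' : f ≠ e := by
      rintro rfl
      exact hnc d (mem_insert_self _ _) (crosses_comm.1 hde)
    exact mem_insert_of_mem (mem_erase.2 ⟨hfe', hfT⟩)
  · rw [mem_insert, not_or]
    exact ⟨fun h => crosses_irrefl d (h ▸ hde), notMem_erase e _⟩
  · exact fun g hg hge => mem_insert_of_mem (mem_erase.2 ⟨hge, hg⟩)

lemma exists_isFlip_of_quadrilateral (T : Triangulation n) {p a w b : Fin n} (hpa : p < a)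
    (haw : a < w) (hwb : w < b) (he : s(a, b) ∈ T.diags) (h₁ : Joins T.diags p a)
    (h₂ : Joins T.diags a w) (h₃ : Joins T.diags w b) (h₄ : Joins T.diags p b) :
    ∃ T' : Triangulation n, IsFlip T s(a, b) T' ∧
      T'.diags = insert s(p, w) (T.diags.erase s(a, b)) := by
  have hpw : p < w := hpa.trans haw
  refine T.exists_isFlip he ((isDiag_mk_iff hpw).2 ⟨by omega, by omega⟩)
    (Or.inl ⟨p, w, a, b, rfl, rfl, hpa, haw, hwb⟩) ?_ ?_
  · intro g hg hcr
    obtain ⟨c, c', rfl, hi⟩ := (crosses_mk_iff hpw).1 hcr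
    have hgT := mem_of_mem_erase hg
    have hge : ¬(c = a ∧ c' = b) := fun h => ne_of_mem_erase hg (by rw [h.1, h.2])
    have := h₁.not_interleave (T.noncross _ hgT)
    have := h₃.not_interleave (T.noncross _ hgT)
    have := h₂.not_interleave (T.noncross _ hgT)
    have := h₄.not_interleave (T.noncross _ hgT)
    omega
  · intro f _ hfe hnc
    obtain ⟨c, c', rfl, hi⟩ := (crosses_mk_iff (haw.trans hwb)).1 (crosses_comm.1 hfe)
    have side : ∀ {x y : Fin n}, x < y → (x ≠ a ∨ y ≠ b) → s(x, y) ≠ s(a, b) := by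
      intro x y _ _
      rw [Ne, Sym2.eq_iff]
      omega
    have := ((h₁.erase (side hpa (by omega))).not_interleave hnc)
    have := ((h₂.erase (side haw (by omega))).not_interleave hnc)
    have := ((h₃.erase (side hwb (by omega))).not_interleave hnc)
    have := ((h₄.erase (side (hpa.trans (haw.trans hwb)) (by omega))).not_interleave hnc)
    obtain ⟨rfl, rfl⟩ : c = p ∧ c' = w := by omega
    rfl

lemma exists_ear (T : Triangulation n) (hn : 4 ≤ n) :
    ∃ p q : Fin n, q.val = p.val + 2 ∧ s(p, q) ∈ T.diags := by
  suffices h : ∀ k (a b : Fin n), b.val = a.val + k + 2 → Joins T.diags a b →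
      ∃ p q : Fin n, q.val = p.val + 2 ∧ s(p, q) ∈ T.diags from
    h (n - 3) ⟨0, by omega⟩ ⟨n - 1, by omega⟩ (by simp only; omega) (Or.inr (Or.inl ⟨rfl, rfl⟩))
  intro k
  induction k using Nat.strong_induction_on with
  | _ k ih =>
  intro a b hab h
  obtain ⟨w, haw, hwb, haw', hwb'⟩ := T.exists_apex (by omega) h
  rcases Nat.eq_zero_or_pos k with rfl | hk
  · rcases h with h | h | h
    · omega
    · omega
    · exact ⟨a, b, hab, h⟩
  by_cases hw : a.val + 2 ≤ w.val
  · exact ih (w.val - a.val - 2) (by omega) a w (by omega) haw'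
  · exact ih (b.val - w.val - 2) (by omega) w b (by omega) hwb'

end Triangulation

section Fan

open Classical in
noncomputable def fanAtZero (n : ℕ) [NeZero n] : Triangulation n where
  diags := univ.filter fun d => (0 : Fin n) ∈ d ∧ IsDiag n d
  isDiag _ hd := (mem_filter.1 hd).2.2
  noncross _ hd _ he := not_crosses_of_mem_of_mem (mem_filter.1 hd).2.1 (mem_filter.1 he).2.1
  maximal := by
    intro d hd hnc
    obtain ⟨a, b, hab, rfl⟩ := exists_mk_of_isDiag hd
    refine mem_filter.2 ⟨mem_univ _, ?_, hd⟩
    by_contra h0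
    have ha : 0 < a := by rw [Sym2.mem_iff] at h0; have := Fin.val_zero n; omega
    have hd' := (isDiag_mk_iff hab).1 hd
    set a' : Fin n := ⟨a.val + 1, by omega⟩
    have ha' : (0 : Fin n) < a' := Fin.lt_def.2 (by simp only [a', Fin.val_zero]; omega)
    refine hnc s(0, a') (mem_filter.2 ⟨mem_univ _, Sym2.mem_mk_left _ _, ?_⟩)
      (Or.inr ⟨0, a', a, b, rfl, rfl, ha, Fin.lt_def.2 (by simp only [a']; omega),
        Fin.lt_def.2 (by simp only [a']; omega)⟩)
    exact (isDiag_mk_iff ha').2 (by simp only [a', Fin.val_zero]; omega)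

variable {n : ℕ} [NeZero n]

lemma mem_fanAtZero {d : Sym2 (Fin n)} : d ∈ (fanAtZero n).diags ↔ (0 : Fin n) ∈ d ∧ IsDiag n d := by
  simp [fanAtZero]

lemma card_fanAtZero_le : #(fanAtZero n).diags ≤ n - 3 := by
  have hsub : (fanAtZero n).diags ⊆ (Icc 2 (n - 2)).image fun m => s(0, Fin.ofNat n m) := by
    intro d hd
    obtain ⟨h0, hd⟩ := mem_fanAtZero.1 hd
    obtain ⟨a, b, hab, rfl⟩ := exists_mk_of_isDiag hd
    have hd' := (isDiag_mk_iff hab).1 hd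
    have := Fin.val_zero n
    obtain rfl : a = 0 := by rw [Sym2.mem_iff] at h0; omega
    exact mem_image.2 ⟨b.val, mem_Icc.2 ⟨by omega, by omega⟩, by rw [Fin.ofNat_val_eq_self]⟩
  calc #(fanAtZero n).diags ≤ #(Icc 2 (n - 2)) := (card_le_card hsub).trans card_image_le
    _ ≤ n - 3 := by rw [Nat.card_Icc]; omega

lemma Triangulation.eq_fanAtZero_of_forall (T : Triangulation n)
    (h : ∀ d ∈ T.diags, (0 : Fin n) ∈ d) : T = fanAtZero n := by
  refine Triangulation.diags_injective (Finset.ext fun d => ⟨fun hd => ?_, fun hd => ?_⟩)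
  · exact mem_fanAtZero.2 ⟨h d hd, T.isDiag d hd⟩
  · obtain ⟨h0, hd⟩ := mem_fanAtZero.1 hd
    exact T.maximal d hd fun g hg => not_crosses_of_mem_of_mem h0 (h g hg)

namespace Triangulation

lemma exists_longest_of_ne_fanAtZero (T : Triangulation n) (hT : T ≠ fanAtZero n) :
    ∃ a b : Fin n, 0 < a ∧ a < b ∧ s(a, b) ∈ T.diags ∧
      ∀ c c' : Fin n, 0 < c → c < c' → s(c, c') ∈ T.diags → c'.val - c.val ≤ b.val - a.val := by
  classical
  obtain ⟨d, hd, h0⟩ : ∃ d ∈ T.diags, (0 : Fin n) ∉ d := by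
    by_contra! h
    exact hT (T.eq_fanAtZero_of_forall h)
  obtain ⟨a, b, hab, rfl⟩ := exists_mk_of_isDiag (T.isDiag _ hd)
  set P := univ.filter fun q : Fin n × Fin n => 0 < q.1 ∧ q.1 < q.2 ∧ s(q.1, q.2) ∈ T.diags
  have hP : (a, b) ∈ P := by
    have := Fin.val_zero n
    simp only [P, mem_filter, mem_univ, true_and]
    rw [Sym2.mem_iff] at h0
    exact ⟨by omega, hab, hd⟩
  obtain ⟨⟨a, b⟩, hmem, hmax⟩ := P.exists_max_image (fun q => q.2.val - q.1.val) ⟨_, hP⟩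
  simp only [P, mem_filter, mem_univ, true_and] at hmem hmax
  exact ⟨a, b, hmem.1, hmem.2.1, hmem.2.2, fun c c' hc hcc hg => hmax (c, c') ⟨hc, hcc, hg⟩⟩

/-- The triangle of `T` on the side of a longest diagonal `s(a, b)` avoiding `0` that contains
`0` has apex `0`. -/
lemma joins_zero_of_longest (T : Triangulation n) {a b x : Fin n} (ha : 0 < a) (hab : a < b)
    (he : s(a, b) ∈ T.diags)
    (hlong : ∀ c c' : Fin n, 0 < c → c < c' → s(c, c') ∈ T.diags →
      c'.val - c.val ≤ b.val - a.val)
    (hx : x = a ∨ x = b) : Joins T.diags 0 x := by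
  have := Fin.val_zero n
  by_cases hx1 : x.val = 1
  · exact Or.inl (by omega)
  by_cases hxn : x.val = n - 1
  · exact Or.inr (Or.inl ⟨this, hxn⟩)
  refine T.joins_of_mem (T.mem_of_forall_not_interleave (by omega) (by omega) fun c c' hg => ?_)
  have hcross := (T.joins_of_mem he).not_interleave (T.noncross _ hg)
  refine ⟨fun hi => ?_, by omega⟩
  have := hlong c c' hi.1 (by omega) hg
  omega

lemma exists_flipAdj_toward_fanAtZero (T : Triangulation n) (hT : T ≠ fanAtZero n) :
    ∃ T' : Triangulation n, FlipAdj T T' ∧ (∀ d ∈ T'.diags, d ∉ T.diags → (0 : Fin n) ∈ d) ∧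
      #((fanAtZero n).diags \ T'.diags) < #((fanAtZero n).diags \ T.diags) := by
  obtain ⟨a, b, ha, hab, he, hlong⟩ := T.exists_longest_of_ne_fanAtZero hT
  obtain ⟨w, haw, hwb, haw', hwb'⟩ :=
    T.exists_apex ((isDiag_mk_iff hab).1 (T.isDiag _ he)).1 (T.joins_of_mem he)
  obtain ⟨T', hflip, hT'⟩ := T.exists_isFlip_of_quadrilateral ha haw hwb he
    (T.joins_zero_of_longest ha hab he hlong (Or.inl rfl)) haw' hwb'
    (T.joins_zero_of_longest ha hab he hlong (Or.inr rfl))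
  have h0e : (0 : Fin n) ∉ s(a, b) := by
    have := Fin.val_zero n
    rw [Sym2.mem_iff]
    omega
  have hnew : s(0, w) ∈ (fanAtZero n).diags \ T.diags := by
    refine mem_sdiff.2 ⟨mem_fanAtZero.2 ⟨Sym2.mem_mk_left _ _, T'.isDiag _ ?_⟩, fun h => ?_⟩
    · exact hT' ▸ mem_insert_self _ _
    · exact T.noncross _ h _ he (Or.inl ⟨0, w, a, b, rfl, rfl, ha, haw, hwb⟩)
  refine ⟨T', ⟨_, hflip⟩, fun d hd hdT => ?_, ?_⟩
  · rw [hT', mem_insert] at hd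
    rcases hd with rfl | hd
    · exact Sym2.mem_mk_left _ _
    · exact absurd (mem_of_mem_erase hd) hdT
  · refine lt_of_le_of_lt (card_le_card fun d hd => ?_) (card_erase_lt_of_mem hnew)
    rw [mem_sdiff, hT', mem_insert, mem_erase] at hd
    refine mem_erase.2 ⟨fun h => hd.2 (Or.inl h), mem_sdiff.2 ⟨hd.1, fun hdT => hd.2 ?_⟩⟩
    refine Or.inr ⟨fun hde => h0e ?_, hdT⟩
    exact hde ▸ (mem_fanAtZero.1 hd.1).1

end Triangulation

end Fan

namespace SimpleGraph

variable {V W : Type*} {G : SimpleGraph V}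

lemma exists_walk_length_le_of_descent (f : V → ℕ) {c : V}
    (h : ∀ v, v ≠ c → ∃ w, G.Adj v w ∧ f w < f v) (v : V) : ∃ p : G.Walk v c, p.length ≤ f v := by
  induction hv : f v using Nat.strong_induction_on generalizing v with
  | _ m ih =>
  by_cases hvc : v = c
  · subst hvc
    exact ⟨.nil, Nat.zero_le _⟩
  obtain ⟨w, hvw, hw⟩ := h v hvc
  obtain ⟨p, hp⟩ := ih (f w) (hv ▸ hw) w rfl
  exact ⟨.cons hvw p, by rw [Walk.length_cons]; omega⟩

lemma connected_and_dist_le_of_walk_length_le {c : V} {m : ℕ}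
    (h : ∀ v, ∃ p : G.Walk v c, p.length ≤ m) : G.Connected ∧ ∀ u v, G.dist u v ≤ 2 * m := by
  refine ⟨connected_iff_exists_forall_reachable G |>.2 ⟨c, fun v => ?_⟩, fun u v => ?_⟩
  · obtain ⟨p, -⟩ := h v
    exact p.reachable.symm
  obtain ⟨p, hp⟩ := h u
  obtain ⟨q, hq⟩ := h v
  calc G.dist u v ≤ (p.append q.reverse).length := dist_le _
    _ ≤ 2 * m := by rw [Walk.length_append, Walk.length_reverse]; omega

lemma Connected.dist_map_le {H : SimpleGraph W} (hG : G.Connected) (f : G →g H) (u v : V) :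
    H.dist (f u) (f v) ≤ G.dist u v := by
  obtain ⟨p, hp⟩ := hG.exists_walk_length_eq_dist u v
  calc H.dist (f u) (f v) ≤ (p.map f).length := dist_le _
    _ = G.dist u v := by rw [Walk.length_map, hp]

end SimpleGraph

section EarAtZero

variable {n : ℕ} [NeZero n] {S : Triangulation n} {u v : Fin n}

lemma zero_notMem_of_ear (hu : u.val = 1) (hv : v.val = n - 1) (hS : s(u, v) ∈ S.diags)
    {d : Sym2 (Fin n)} (hd : d ∈ S.diags) : (0 : Fin n) ∉ d := by
  intro h0
  obtain ⟨a, b, hab, rfl⟩ := exists_mk_of_isDiag (S.isDiag _ hd)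
  have hb := (isDiag_mk_iff hab).1 (S.isDiag _ hd)
  have := (S.joins_of_mem hS).not_interleave (S.noncross _ hd)
  have := Fin.val_zero n
  rw [Sym2.mem_iff] at h0
  omega

lemma Triangulation.exists_mem_fanAtZero_of_ear_notMem (T : Triangulation n) (hn : 4 ≤ n)
    (hu : u.val = 1) (hv : v.val = n - 1) (hT : s(u, v) ∉ T.diags) :
    ∃ d ∈ (fanAtZero n).diags, d ∈ T.diags := by
  by_contra! h
  refine hT (T.mem_of_forall_not_interleave (by omega) (by omega) fun c c' hg => ⟨by omega, ?_⟩)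
  intro hi
  have := Fin.val_zero n
  obtain rfl : c = 0 := by omega
  exact h _ (mem_fanAtZero.2 ⟨Sym2.mem_mk_left _ _, T.isDiag _ hg⟩) hg

theorem TnS_connected_dist_le_of_ear (hn : 4 ≤ n) (hu : u.val = 1) (hv : v.val = n - 1)
    (hS : s(u, v) ∈ S.diags) :
    (TnS n S).Connected ∧ ∀ A B : TnSVert n S, (TnS n S).dist A B ≤ 2 * n - 8 := by
  have hS0 {d : Sym2 (Fin n)} : d ∈ S.diags → (0 : Fin n) ∉ d := zero_notMem_of_ear hu hv hS
  have hfan : Disjoint (fanAtZero n).diags S.diags :=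
    disjoint_left.2 fun d hd hdS => hS0 hdS (mem_fanAtZero.1 hd).1
  let μ : TnSVert n S → ℕ := fun A => #((fanAtZero n).diags \ A.1.diags)
  have hμ (A : TnSVert n S) : μ A ≤ n - 4 := by
    obtain ⟨d, hd, hdA⟩ := A.1.exists_mem_fanAtZero_of_ear_notMem hn hu hv
      fun h => disjoint_left.1 A.2 h hS
    calc μ A ≤ #((fanAtZero n).diags.erase d) :=
          card_le_card fun x hx => mem_erase.2 ⟨fun h => (mem_sdiff.1 hx).2 (h ▸ hdA),
            (mem_sdiff.1 hx).1⟩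
      _ ≤ n - 4 := by rw [card_erase_of_mem hd]; have := card_fanAtZero_le (n := n); omega
  have hstep (A : TnSVert n S) (hA : A ≠ ⟨fanAtZero n, hfan⟩) :
      ∃ B, (TnS n S).Adj A B ∧ μ B < μ A := by
    obtain ⟨T', hflip, hnew, hlt⟩ :=
      A.1.exists_flipAdj_toward_fanAtZero fun h => hA (Subtype.ext h)
    have hT' : Disjoint T'.diags S.diags := disjoint_left.2 fun d hd hdS =>
      if hdA : d ∈ A.1.diags then disjoint_left.1 A.2 hdA hdS else hS0 hdS (hnew d hd hdA)
    exact ⟨⟨T', hT'⟩, ⟨fun h => hflip.ne (congrArg Subtype.val h), Or.inl hflip⟩, hlt⟩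
  have := SimpleGraph.connected_and_dist_le_of_walk_length_le fun A =>
    (SimpleGraph.exists_walk_length_le_of_descent μ hstep A).imp fun _ hp => hp.trans (hμ A)
  exact ⟨this.1, fun A B => (this.2 A B).trans (by omega)⟩

end EarAtZero

section Rotation

variable {n : ℕ} [NeZero n]

lemma isDiag_iff_exists_add_one {d : Sym2 (Fin n)} :
    IsDiag n d ↔ ∃ a b : Fin n, d = s(a, b) ∧ a ≠ b ∧ a + 1 ≠ b ∧ b + 1 ≠ a := by
  have key (a b : Fin n) : (a.val + 1) % n ≠ b.val ↔ a + 1 ≠ b := by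
    rw [Ne, Ne, Fin.ext_iff, Fin.val_add, Fin.val_one', Nat.add_mod_mod]
  simp only [IsDiag, key]

lemma isDiag_map_add (k : Fin n) {d : Sym2 (Fin n)} (h : IsDiag n d) :
    IsDiag n (d.map (· + k)) := by
  rw [isDiag_iff_exists_add_one] at h ⊢
  obtain ⟨a, b, rfl, h₁, h₂, h₃⟩ := h
  refine ⟨a + k, b + k, Sym2.map_mk _ _ _, ?_, ?_, ?_⟩
  · rwa [Ne, add_left_inj]
  · rwa [add_right_comm, Ne, add_left_inj]
  · rwa [add_right_comm, Ne, add_left_inj]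

lemma map_add_map_add (d : Sym2 (Fin n)) (k l : Fin n) :
    (d.map (· + k)).map (· + l) = d.map (· + (k + l)) := by
  simp only [Sym2.map_map, Function.comp_def, add_assoc]

lemma map_add_map_add_neg (d : Sym2 (Fin n)) (k : Fin n) : (d.map (· + k)).map (· + -k) = d := by
  simp only [map_add_map_add, add_neg_cancel, add_zero, Sym2.map_id', id_eq]

lemma map_add_neg_map_add (d : Sym2 (Fin n)) (k : Fin n) : (d.map (· + -k)).map (· + k) = d := by
  simpa only [neg_neg] using map_add_map_add_neg d (-k)

noncomputable def Triangulation.rotate (T : Triangulation n) (k : Fin n) : Triangulation n where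
  diags := T.diags.image (Sym2.map (· + k))
  isDiag := by
    simp only [mem_image, forall_exists_index, and_imp, forall_apply_eq_imp_iff₂]
    exact fun d hd => isDiag_map_add k (T.isDiag d hd)
  noncross := by
    simp only [mem_image, forall_exists_index, and_imp, forall_apply_eq_imp_iff₂]
    intro d hd e he h
    have := crosses_map_add (-k) h
    rw [map_add_map_add_neg, map_add_map_add_neg] at this
    exact T.noncross d hd e he this
  maximal := by
    intro d hd hnc
    refine mem_image.2 ⟨d.map (· + -k), T.maximal _ (isDiag_map_add _ hd) fun g hg h => ?_,
      map_add_neg_map_add d k⟩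
    have := crosses_map_add k h
    rw [map_add_neg_map_add] at this
    exact hnc _ (mem_image_of_mem _ hg) this

namespace Triangulation

lemma diags_rotate (T : Triangulation n) (k : Fin n) :
    (T.rotate k).diags = T.diags.image (Sym2.map (· + k)) :=
  rfl

lemma mem_rotate (T : Triangulation n) (k : Fin n) {a b : Fin n} (h : s(a, b) ∈ T.diags) :
    s(a + k, b + k) ∈ (T.rotate k).diags :=
  mem_image.2 ⟨_, h, Sym2.map_mk _ _ _⟩

lemma rotate_rotate_neg (T : Triangulation n) (k : Fin n) : (T.rotate k).rotate (-k) = T := by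
  refine diags_injective ?_
  simp only [diags_rotate, image_image, Function.comp_def, map_add_map_add_neg, image_id']

lemma disjoint_rotate {T S : Triangulation n} (h : Disjoint T.diags S.diags) (k : Fin n) :
    Disjoint (T.rotate k).diags (S.rotate k).diags :=
  (disjoint_image (Sym2.map.injective (add_left_injective k))).2 h

end Triangulation

lemma FlipAdj.rotate {T T' : Triangulation n} (h : FlipAdj T T') (k : Fin n) :
    FlipAdj (T.rotate k) (T'.rotate k) := by
  obtain ⟨d, hd, hd', hkeep⟩ := h
  have hinj := Sym2.map.injective (add_left_injective k)
  refine ⟨d.map (· + k), mem_image_of_mem _ hd, fun h => hd' ?_, ?_⟩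
  · obtain ⟨e, he, hed⟩ := mem_image.1 h
    exact hinj hed ▸ he
  · simp only [Triangulation.diags_rotate, mem_image, forall_exists_index, and_imp,
      forall_apply_eq_imp_iff₂]
    exact fun e he hed => ⟨e, hkeep e he fun h => hed (h ▸ rfl), rfl⟩

noncomputable def TnS.rotateHom (S : Triangulation n) (k : Fin n) :
    TnS n S →g TnS n (S.rotate k) where
  toFun A := ⟨A.1.rotate k, Triangulation.disjoint_rotate A.2 k⟩
  map_rel' {A B} h := by
    refine ⟨fun hAB => h.1 (Subtype.ext ?_), h.2.imp (·.rotate k) (·.rotate k)⟩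
    simpa only [Triangulation.rotate_rotate_neg] using congrArg (·.1.rotate (-k)) hAB

lemma TnS.rotateHom_surjective (S : Triangulation n) (k : Fin n) :
    Function.Surjective (TnS.rotateHom S k) := by
  intro B
  have hB : Disjoint (B.1.rotate (-k)).diags S.diags := by
    simpa only [Triangulation.rotate_rotate_neg] using Triangulation.disjoint_rotate B.2 (-k)
  refine ⟨⟨B.1.rotate (-k), hB⟩, Subtype.ext ?_⟩
  show (B.1.rotate (-k)).rotate k = B.1
  simpa only [neg_neg] using (B.1).rotate_rotate_neg (-k)

lemma TnS_connected_dist_le_rotate {S : Triangulation n} {m : ℕ}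
    (h : (TnS n S).Connected ∧ ∀ A B : TnSVert n S, (TnS n S).dist A B ≤ m) (k : Fin n) :
    (TnS n (S.rotate k)).Connected ∧
      ∀ A B : TnSVert n (S.rotate k), (TnS n (S.rotate k)).dist A B ≤ m := by
  have hf := TnS.rotateHom_surjective S k
  refine ⟨h.1.map _ hf, fun A B => ?_⟩
  obtain ⟨A, rfl⟩ := hf A
  obtain ⟨B, rfl⟩ := hf B
  exact (h.1.dist_map_le _ A B).trans (h.2 A B)

end Rotation

/-- For `n ≥ 5` and any triangulation `S` of the convex
`n`-gon, the flip graph `T_n(S)` on triangulations disjoint from `S` is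
connected and has diameter at most `2n - 8`. -/
theorem TnS_connected_diam (n : ℕ) (hn : 5 ≤ n) (S : Triangulation n) :
    (TnS n S).Connected ∧
      ∀ A B : TnSVert n S, (TnS n S).dist A B ≤ 2 * n - 8 := by
  have : NeZero n := ⟨by omega⟩
  obtain ⟨p, q, hpq, hS⟩ := S.exists_ear (by omega)
  let k : Fin n := ⟨n - (p.val + 1), by omega⟩
  have hp : (p + k).val = n - 1 := by
    simp only [Fin.val_add_eq_ite, k]
    split_ifs <;> omega
  have hq : (q + k).val = 1 := by
    simp only [Fin.val_add_eq_ite, k]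
    split_ifs <;> omega
  have hear : s(q + k, p + k) ∈ (S.rotate k).diags := Sym2.eq_swap ▸ S.mem_rotate k hS
  have := TnS_connected_dist_le_rotate (TnS_connected_dist_le_of_ear (by omega) hq hp hear) (-k)
  rwa [S.rotate_rotate_neg] at this
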